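/- Let G be a linearly ordered abelian group, H ⊆ H' convex subgroups of G, and n, m positive integers with n | m. Then nH + mH' = nH' ∩ (H + mH'). -/

import Mathlib

/-- `kK = {k • x : x ∈ K}` as a subgroup. -/
def smulSub {G : Type*} [AddCommGroup G] (k : ℕ) (K : AddSubgroup G) : AddSubgroup G :=
  AddSubgroup.map (k • AddMonoidHom.id G) K

/-- A subgroup `H` of a linearly ordered abelian group is convex if
`0 ≤ g ≤ h` and `h ∈ H` imply `g ∈ H`. -/
def IsConvexSubgroup {G : Type*} [AddCommGroup G] [LinearOrder G] [IsOrderedAddMonoid G] (H : AddSubgroup G) : Prop :=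
  ∀ g h : G, 0 ≤ g → g ≤ h → h ∈ H → g ∈ H

/-!
Since `n ∣ m`, `mH' ≤ nH'`, so by the modular law in the lattice of subgroups
`nH' ⊓ (H + mH') = (H ⊓ nH') + mH'`. It remains to see `H ⊓ nH' = nH`: if `n • y ∈ H`
then `|y| ≤ n • |y| ∈ H`, so `y ∈ H` by convexity.
-/

section smulSub

variable {G : Type*} [AddCommGroup G]

lemma mem_smulSub {k : ℕ} {K : AddSubgroup G} {x : G} :
    x ∈ smulSub k K ↔ ∃ y ∈ K, k • y = x := by
  simp [smulSub, AddSubgroup.mem_map]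

lemma smulSub_le (k : ℕ) (K : AddSubgroup G) : smulSub k K ≤ K := by
  rintro _ ⟨y, hy, rfl⟩
  exact K.nsmul_mem hy k

lemma smulSub_mono {k : ℕ} {K L : AddSubgroup G} (h : K ≤ L) : smulSub k K ≤ smulSub k L :=
  AddSubgroup.map_mono h

lemma smulSub_le_smulSub_of_dvd {a b : ℕ} (hab : a ∣ b) (K : AddSubgroup G) :
    smulSub b K ≤ smulSub a K := by
  obtain ⟨c, rfl⟩ := hab
  rintro _ ⟨y, hy, rfl⟩
  exact mem_smulSub.mpr ⟨c • y, K.nsmul_mem hy c, by simp [mul_comm a c, mul_nsmul]⟩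

lemma inf_smulSub_eq_smulSub {H L : AddSubgroup G} (hH : H.toAddSubmonoid.NSMulSaturated)
    (hle : H ≤ L) {n : ℕ} (hn : n ≠ 0) : H ⊓ smulSub n L = smulSub n H := by
  refine le_antisymm ?_ (le_inf (smulSub_le n H) (smulSub_mono hle))
  rintro _ ⟨hx, y, -, rfl⟩
  exact ⟨y, (hH hx).resolve_left hn, rfl⟩

end smulSub

lemma IsConvexSubgroup.nsmulSaturated {G : Type*} [AddCommGroup G] [LinearOrder G]
    [IsOrderedAddMonoid G] {H : AddSubgroup G} (hH : IsConvexSubgroup H) :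
    H.toAddSubmonoid.NSMulSaturated := by
  intro n y (hy : n • y ∈ H)
  refine or_iff_not_imp_left.mpr fun hn => show y ∈ H from abs_mem_iff.mp ?_
  have habs : n • |y| ∈ H := by
    rw [← abs_nsmul]
    exact abs_mem_iff.mpr hy
  have hle : |y| ≤ n • |y| :=
    le_smul_of_one_le_left (abs_nonneg y) (Nat.one_le_iff_ne_zero.mpr hn)
  exact hH _ _ (abs_nonneg y) hle habs

theorem smul_sup_smul_eq_inf_general {G : Type*} [AddCommGroup G] [LinearOrder G] [IsOrderedAddMonoid G]
    (H H' : AddSubgroup G) (hH : IsConvexSubgroup H)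
    (hle : H ≤ H') (n m : ℕ) (hn : 1 ≤ n) (hdvd : n ∣ m) :
    smulSub n H ⊔ smulSub m H' = smulSub n H' ⊓ (H ⊔ smulSub m H') := by
  rw [inf_comm, sup_comm H, sup_inf_assoc_of_le H (smulSub_le_smulSub_of_dvd hdvd H'),
    inf_smulSub_eq_smulSub hH.nsmulSaturated hle (Nat.one_le_iff_ne_zero.mp hn), sup_comm]

/-- For convex subgroups `H ⊆ H'` of a linearly ordered abelian group and positive
integers `n ∣ m`, `nH + mH' = nH' ∩ (H + mH')`. -/
theorem smul_sup_smul_eq_inf {G : Type*} [AddCommGroup G] [LinearOrder G] [IsOrderedAddMonoid G]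
    (H H' : AddSubgroup G) (hH : IsConvexSubgroup H) (hH' : IsConvexSubgroup H')
    (hle : H ≤ H') (n m : ℕ) (hn : 1 ≤ n) (hm : 1 ≤ m) (hdvd : n ∣ m) :
    smulSub n H ⊔ smulSub m H' = smulSub n H' ⊓ (H ⊔ smulSub m H') :=
  smul_sup_smul_eq_inf_general H H' hH hle n m hn hdvd
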